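/- arXiv:2403.19437 — 2 statements merged into one kernel-verified Lean document; each statement's English description precedes it below -/
import Mathlib

section
/- Let (Ω, 𝒜, μ) be an atom-free σ-finite measure space and K ∈ (0, μ(Ω)). Then |·|_K is a norm on L^1(Ω); in particular |u|_K > 0 whenever u ≠ 0 in L^1(Ω). -/
/-!
Subadditivity and homogeneity hold pointwise under each integral `∫_A |u|` and pass to the
supremum. For definiteness, if `u ≠ 0` a.e. then some level set `{ε ≤ |u|}` has positive
measure, and it has finite measure because `u` is integrable. Absence of atoms lets us halve
a set of positive measure repeatedly while keeping positive measure, so this level set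
contains a set `B` with `0 < μ B ≤ K`, and `ε μ(B) ≤ ∫_B |u| ≤ |u|_K`.
-/

open MeasureTheory Set
open scoped ENNReal

/-- The largest-K-norm: `|u|_K = sup { ∫_A |u| dμ : A measurable, μ(A) ≤ K }`. -/
noncomputable def largestK {Ω : Type*} [MeasurableSpace Ω] (μ : Measure Ω) (K : ℝ≥0∞)
    (u : Ω → ℝ) : ℝ :=
  sSup {r : ℝ | ∃ A : Set Ω, MeasurableSet A ∧ μ A ≤ K ∧ r = ∫ x in A, |u x| ∂μ}

/-- A measure is atom-free if no measurable set `A` with `μ A > 0` is an atom. -/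
def AtomFree {Ω : Type*} [MeasurableSpace Ω] (μ : Measure Ω) : Prop :=
  ∀ A : Set Ω, MeasurableSet A → 0 < μ A →
    ∃ B : Set Ω, MeasurableSet B ∧ B ⊆ A ∧ 0 < μ B ∧ 0 < μ (A \ B)

open scoped Pointwise

namespace AtomFree

variable {Ω : Type*} [MeasurableSpace Ω] {μ : Measure Ω}

lemma exists_subset_le_half (hμ : AtomFree μ) {A : Set Ω} (hA : MeasurableSet A)
    (hpos : 0 < μ A) :
    ∃ B ⊆ A, MeasurableSet B ∧ 0 < μ B ∧ μ B ≤ μ A * 2⁻¹ := by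
  obtain ⟨C, hC, hCA, hCpos, hdiffpos⟩ := hμ A hA hpos
  have hsplit : μ C + μ (A \ C) = μ A := by
    simpa [inter_eq_self_of_subset_right hCA] using measure_inter_add_sdiff A hC
  rw [← ENNReal.div_eq_inv_mul.trans (mul_comm _ _)]
  by_cases hsmall : μ C ≤ μ A / 2
  · exact ⟨C, hCA, hC, hCpos, hsmall⟩
  · refine ⟨A \ C, sdiff_subset, hA.diff hC, hdiffpos, ?_⟩
    by_contra hlarge
    have := ENNReal.add_lt_add (not_le.mp hsmall) (not_le.mp hlarge)
    rw [ENNReal.add_halves, hsplit] at this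
    exact this.false

lemma exists_subset_le_mul_inv_two_pow (hμ : AtomFree μ) {A : Set Ω} (hA : MeasurableSet A)
    (hpos : 0 < μ A) (n : ℕ) :
    ∃ B ⊆ A, MeasurableSet B ∧ 0 < μ B ∧ μ B ≤ μ A * 2⁻¹ ^ n := by
  induction n with
  | zero => exact ⟨A, subset_rfl, hA, hpos, by simp⟩
  | succ n ih =>
    obtain ⟨B, hBA, hB, hBpos, hBle⟩ := ih
    obtain ⟨C, hCB, hC, hCpos, hCle⟩ := hμ.exists_subset_le_half hB hBpos
    refine ⟨C, hCB.trans hBA, hC, hCpos, ?_⟩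
    calc μ C ≤ μ B * 2⁻¹ := hCle
      _ ≤ μ A * 2⁻¹ ^ n * 2⁻¹ := by gcongr
      _ = μ A * 2⁻¹ ^ (n + 1) := by rw [mul_assoc, ← pow_succ]

lemma exists_subset_le (hμ : AtomFree μ) {A : Set Ω} (hA : MeasurableSet A)
    (hpos : 0 < μ A) (hfin : μ A ≠ ∞) {K : ℝ≥0∞} (hK : 0 < K) :
    ∃ B ⊆ A, MeasurableSet B ∧ 0 < μ B ∧ μ B ≤ K := by
  obtain ⟨n, hn⟩ := ENNReal.exists_inv_two_pow_lt (ENNReal.div_pos hK.ne' hfin).ne'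
  obtain ⟨B, hBA, hB, hBpos, hBle⟩ := hμ.exists_subset_le_mul_inv_two_pow hA hpos n
  refine ⟨B, hBA, hB, hBpos, ?_⟩
  calc μ B ≤ μ A * 2⁻¹ ^ n := hBle
    _ ≤ μ A * (K / μ A) := by gcongr
    _ ≤ K := ENNReal.mul_div_le

end AtomFree

section largestK

variable {Ω : Type*} [MeasurableSpace Ω] {μ : Measure Ω} {K : ℝ≥0∞} {u v : Ω → ℝ}

lemma largestK_bddAbove (hu : Integrable u μ) :
    BddAbove {r : ℝ | ∃ A : Set Ω, MeasurableSet A ∧ μ A ≤ K ∧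
      r = ∫ x in A, |u x| ∂μ} := by
  refine ⟨∫ x, |u x| ∂μ, ?_⟩
  rintro r ⟨A, -, -, rfl⟩
  exact setIntegral_le_integral hu.abs (.of_forall fun x => abs_nonneg _)

lemma setIntegral_abs_le_largestK (hu : Integrable u μ) {A : Set Ω} (hA : MeasurableSet A)
    (hAK : μ A ≤ K) :
    ∫ x in A, |u x| ∂μ ≤ largestK μ K u :=
  le_csSup (largestK_bddAbove hu) ⟨A, hA, hAK, rfl⟩

lemma largestK_le {c : ℝ}
    (h : ∀ A : Set Ω, MeasurableSet A → μ A ≤ K → ∫ x in A, |u x| ∂μ ≤ c) :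
    largestK μ K u ≤ c :=
  csSup_le ⟨0, ∅, .empty, by simp, by simp⟩ fun _ ⟨A, hA, hAK, hr⟩ => hr ▸ h A hA hAK

lemma largestK_congr_ae (h : u =ᵐ[μ] v) : largestK μ K u = largestK μ K v := by
  have hint : ∀ A : Set Ω, ∫ x in A, |u x| ∂μ = ∫ x in A, |v x| ∂μ := fun A =>
    integral_congr_ae (ae_restrict_of_ae (h.mono fun x hx => by simp only [hx]))
  simp only [largestK, hint]

lemma largestK_add_le (hu : Integrable u μ) (hv : Integrable v μ) :
    largestK μ K (u + v) ≤ largestK μ K u + largestK μ K v := by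
  refine largestK_le fun A hA hAK => ?_
  calc ∫ x in A, |(u + v) x| ∂μ ≤ ∫ x in A, (|u x| + |v x|) ∂μ :=
        integral_mono (hu.add hv).abs.integrableOn
          (hu.abs.integrableOn.add hv.abs.integrableOn) fun x => abs_add_le _ _
    _ = ∫ x in A, |u x| ∂μ + ∫ x in A, |v x| ∂μ :=
        integral_add hu.abs.integrableOn hv.abs.integrableOn
    _ ≤ largestK μ K u + largestK μ K v :=
        add_le_add (setIntegral_abs_le_largestK hu hA hAK)
          (setIntegral_abs_le_largestK hv hA hAK)

lemma largestK_smul (c : ℝ) (u : Ω → ℝ) :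
    largestK μ K (c • u) = |c| * largestK μ K u := by
  have hset : {r : ℝ | ∃ A : Set Ω, MeasurableSet A ∧ μ A ≤ K ∧
      r = ∫ x in A, |(c • u) x| ∂μ} =
      |c| • {r : ℝ | ∃ A : Set Ω, MeasurableSet A ∧ μ A ≤ K ∧
        r = ∫ x in A, |u x| ∂μ} := by
    ext r
    simp [mem_smul_set, abs_mul, integral_const_mul, eq_comm, and_assoc]
  rw [largestK, hset, Real.sSup_smul_of_nonneg (abs_nonneg c), smul_eq_mul, largestK]

lemma exists_measure_le_abs_ne_zero (hu : ¬ u =ᵐ[μ] 0) :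
    ∃ ε > (0 : ℝ), μ {x | ε ≤ |u x|} ≠ 0 := by
  by_contra! h
  have hcover : {x | u x ≠ 0} ⊆ ⋃ n : ℕ, {x | 1 / ((n : ℝ) + 1) ≤ |u x|} := fun x hx =>
    mem_iUnion.mpr ((exists_nat_one_div_lt (abs_pos.mpr hx)).imp fun _ hn => hn.le)
  exact hu (ae_iff.mpr (measure_mono_null hcover
    (measure_iUnion_null fun n => h _ Nat.one_div_pos_of_nat)))

lemma largestK_pos (hμ : AtomFree μ) (hK : 0 < K) (hu : Integrable u μ)
    (hne : ¬ u =ᵐ[μ] 0) :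
    0 < largestK μ K u := by
  wlog hmeas : StronglyMeasurable u generalizing u
  · have hae := hu.aestronglyMeasurable.ae_eq_mk
    rw [largestK_congr_ae hae]
    exact this (hu.congr hae) (fun h => hne (hae.trans h))
      hu.aestronglyMeasurable.stronglyMeasurable_mk
  obtain ⟨ε, hε, hEpos⟩ := exists_measure_le_abs_ne_zero hne
  have hE : MeasurableSet {x | ε ≤ |u x|} :=
    measurableSet_le measurable_const hmeas.measurable.abs
  have hEfin : μ {x | ε ≤ |u x|} < ∞ := hu.abs.measure_ge_lt_top hε
  obtain ⟨B, hBE, hB, hBpos, hBK⟩ :=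
    hμ.exists_subset_le hE (pos_iff_ne_zero.mpr hEpos) hEfin.ne hK
  have hBfin : μ B ≠ ∞ := (measure_mono hBE |>.trans_lt hEfin).ne
  calc 0 < ε * μ.real B := mul_pos hε (ENNReal.toReal_pos hBpos.ne' hBfin)
    _ ≤ ∫ x in B, |u x| ∂μ :=
        setIntegral_ge_of_const_le_real hB hBfin (fun x hx => hBE hx) hu.abs.integrableOn
    _ ≤ largestK μ K u := setIntegral_abs_le_largestK hu hB hBK

end largestK

theorem stmt5_general {Ω : Type*} [MeasurableSpace Ω] (μ : Measure Ω)
    (hμ : AtomFree μ) (K : ℝ≥0∞) (hK0 : 0 < K) :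
    (∀ u v : Ω → ℝ, Integrable u μ → Integrable v μ →
      largestK μ K (u + v) ≤ largestK μ K u + largestK μ K v) ∧
    (∀ (c : ℝ) (u : Ω → ℝ), Integrable u μ →
      largestK μ K (c • u) = |c| * largestK μ K u) ∧
    (∀ u : Ω → ℝ, Integrable u μ → ¬ (u =ᵐ[μ] 0) → 0 < largestK μ K u) :=
  ⟨fun _ _ hu hv => largestK_add_le hu hv, fun c u _ => largestK_smul c u,
    fun _ hu hne => largestK_pos hμ hK0 hu hne⟩

/-- for an atom-free σ-finite measure space and `K ∈ (0, μ(Ω))`, the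
largest-K-norm is a norm on `L¹(Ω)`: it is subadditive, absolutely homogeneous, and
positive definite (`|u|_K > 0` whenever `u ≠ 0` in `L¹`). -/
theorem stmt5 {Ω : Type*} [MeasurableSpace Ω] (μ : Measure Ω) [SigmaFinite μ]
    (hμ : AtomFree μ) (K : ℝ≥0∞) (hK0 : 0 < K) (hK : K < μ Set.univ) :
    (∀ u v : Ω → ℝ, Integrable u μ → Integrable v μ →
      largestK μ K (u + v) ≤ largestK μ K u + largestK μ K v) ∧
    (∀ (c : ℝ) (u : Ω → ℝ), Integrable u μ →
      largestK μ K (c • u) = |c| * largestK μ K u) ∧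
    (∀ u : Ω → ℝ, Integrable u μ → ¬ (u =ᵐ[μ] 0) → 0 < largestK μ K u) :=
  stmt5_general μ hμ K hK0
end

section
/- Let (Ω, 𝒜, μ) be an atom-free σ-finite measure space, u ∈ L^1(Ω), and K ∈ (0, μ(Ω)). Then |u|_K = sup { ∫_Ω d|u| dμ : d ∈ L^∞(Ω), 0 ≤ d ≤ 1, ‖d‖_1 ≤ K }, both this supremum and the supremum over characteristic functions in the definition of |u|_K are attained, and if μ(supp u) ≥ K then any maximizer d satisfies ‖d‖_1 = K. -/
open MeasureTheory Set Filter Topology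
open scoped ENNReal

/-!
Bathtub principle. Let `t = inf {s ≥ 0 : μ {|u| > s} ≤ K}`. If `t > 0`, atom-freeness (through a
Sierpiński-type intermediate value argument) gives a set `A` with `{|u| > t} ⊆ A ⊆ {|u| ≥ t}` and
`μ A = K`; if `t = 0`, take `A = {|u| > 0}`. For `0 ≤ d ≤ 1` one has pointwise
`(d - 1_A) (|u| - t) ≤ 0`, hence `∫ d |u| ≤ ∫_A |u| + t (‖d‖₁ - μ A) ≤ ∫_A |u|`, so `1_A` is a
maximizer of both suprema. For a maximizer `d`, equality forces `‖d‖₁ = μ A = K` when `t > 0`,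
and `d = 1` a.e. on `supp u` when `t = 0`.
-/

section

variable {Ω : Type*} [MeasurableSpace Ω] {μ : Measure Ω}

section LevelSets

variable {f : Ω → ℝ} {K : ℝ≥0∞}

theorem measure_setOf_lt_le_of_forall_gt {t : ℝ} (h : ∀ s > t, μ {x | s < f x} ≤ K) :
    μ {x | t < f x} ≤ K := by
  obtain ⟨v, hv_anti, htv, hv_lim⟩ := exists_seq_strictAnti_tendsto t
  have hunion : {x | t < f x} = ⋃ n, {x | v n < f x} := by
    ext x
    refine ⟨fun hx => mem_iUnion.mpr (hv_lim.eventually (gt_mem_nhds hx)).exists, fun hx => ?_⟩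
    obtain ⟨n, hn⟩ := mem_iUnion.mp hx
    exact (htv n).trans hn
  have hmono : Monotone fun n => {x | v n < f x} :=
    fun m n hmn x hx => (hv_anti.antitone hmn).trans_lt hx
  rw [hunion, hmono.measure_iUnion]
  exact iSup_le fun n => h (v n) (htv n)

theorem le_measure_setOf_le_of_forall_lt (hf : AEMeasurable f μ) {a t : ℝ} (hat : a < t)
    (ha : μ {x | a < f x} ≠ ∞) (h : ∀ s ∈ Ioo a t, K ≤ μ {x | s < f x}) :
    K ≤ μ {x | t ≤ f x} := by
  obtain ⟨v, hv_mono, hv, hv_lim⟩ := exists_seq_strictMono_tendsto' hat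
  have hinter : {x | t ≤ f x} = ⋂ n, {x | v n < f x} := by
    ext x
    refine ⟨fun hx => mem_iInter.mpr fun n => (hv n).2.trans_le hx, fun hx => ?_⟩
    exact le_of_tendsto' hv_lim fun n => (mem_iInter.mp hx n).le
  have hanti : Antitone fun n => {x | v n < f x} :=
    fun m n hmn x hx => (hv_mono.monotone hmn).trans_lt hx
  rw [hinter, hanti.measure_iInter (fun n => hf.nullMeasurable measurableSet_Ioi)
    ⟨0, ne_top_of_le_ne_top ha (measure_mono fun x hx => (hv 0).1.trans hx)⟩]
  exact le_iInf fun n => h (v n) (hv n)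

theorem exists_threshold (hf : Integrable f μ) (hK : 0 < K) :
    ∃ t, 0 ≤ t ∧ μ {x | t < f x} ≤ K ∧ (0 < t → K ≤ μ {x | t ≤ f x}) := by
  set T := {t : ℝ | 0 ≤ t ∧ μ {x | t < f x} ≤ K}
  have hT : T.Nonempty := by
    have hempty : ⋂ t : ℝ, {x | t < f x} = ∅ :=
      eq_empty_of_forall_notMem fun x hx => lt_irrefl (f x) (mem_iInter.mp hx (f x))
    have hlim : Tendsto (fun t : ℝ => μ {x | t < f x}) atTop (𝓝 0) := by
      simpa [Function.comp_def, hempty] using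
        tendsto_measure_iInter_atTop (s := fun t : ℝ => {x | t < f x})
          (fun t => hf.aemeasurable.nullMeasurable measurableSet_Ioi)
          (fun a b hab x (hx : b < f x) => (hab.trans_lt hx : a < f x))
          ⟨1, (hf.measure_gt_lt_top one_pos).ne⟩
    obtain ⟨t, ht0, htK⟩ :=
      ((eventually_ge_atTop 0).and (hlim.eventually (gt_mem_nhds hK))).exists
    exact ⟨t, ht0, htK.le⟩
  have hT_bdd : BddBelow T := ⟨0, fun t ht => ht.1⟩
  refine ⟨sInf T, le_csInf hT fun t ht => ht.1, measure_setOf_lt_le_of_forall_gt fun s hs => ?_,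
    fun ht => ?_⟩
  · obtain ⟨r, hrT, hrs⟩ := exists_lt_of_csInf_lt hT hs
    exact (measure_mono fun x hx => hrs.trans hx).trans hrT.2
  · refine le_measure_setOf_le_of_forall_lt hf.aemeasurable (half_lt_self ht)
      (hf.measure_gt_lt_top (half_pos ht)).ne fun s hs => ?_
    by_contra! hsK
    exact (csInf_le hT_bdd ⟨(half_pos ht).le.trans hs.1.le, hsK.le⟩).not_gt hs.2

end LevelSets

section Bathtub

variable {f d : Ω → ℝ}

theorem MeasureTheory.Integrable.mul_of_ae_mem_unitInterval (hf : Integrable f μ)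
    (hd : AEStronglyMeasurable d μ) (hd01 : ∀ᵐ x ∂μ, 0 ≤ d x ∧ d x ≤ 1) :
    Integrable (fun x => d x * f x) μ :=
  hf.bdd_mul hd (c := 1) (hd01.mono fun x hx => by rw [Real.norm_of_nonneg hx.1]; exact hx.2)

theorem integral_mul_add_measureReal_le {A : Set Ω} {t : ℝ} (hf : Integrable f μ)
    (hA : MeasurableSet A) (hA_fin : μ A ≠ ∞) (hfA : ∀ x ∈ A, t ≤ f x)
    (hfAc : ∀ x ∉ A, f x ≤ t) (hd : Integrable d μ) (hd01 : ∀ᵐ x ∂μ, 0 ≤ d x ∧ d x ≤ 1) :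
    ∫ x, d x * f x ∂μ + t * μ.real A ≤ ∫ x in A, f x ∂μ + t * ∫ x, d x ∂μ := by
  have hdf := hf.mul_of_ae_mem_unitInterval hd.1 hd01
  have htA : Integrable (A.indicator fun _ => t) μ :=
    (integrableOn_const hA_fin).integrable_indicator hA
  -- pointwise this is `(d - 1_A) (f - t) ≤ 0`
  have hpt : ∀ᵐ x ∂μ, d x * f x + A.indicator (fun _ => t) x ≤ A.indicator f x + t * d x := by
    filter_upwards [hd01] with x ⟨h0, h1⟩
    by_cases hx : x ∈ A
    · simp only [indicator_of_mem hx]; nlinarith [hfA x hx]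
    · simp only [indicator_of_notMem hx]; nlinarith [hfAc x hx]
  have : ∫ x, (d x * f x + A.indicator (fun _ => t) x) ∂μ ≤
      ∫ x, (A.indicator f x + t * d x) ∂μ :=
    integral_mono_ae (hdf.add htA) ((hf.indicator hA).add (hd.const_mul t)) hpt
  rwa [integral_add hdf htA, integral_add (hf.indicator hA) (hd.const_mul t),
    integral_indicator_const t hA, integral_indicator hA, integral_const_mul, smul_eq_mul,
    mul_comm] at this

theorem ae_eq_one_of_integral_mul_eq (hf : Integrable f μ) (hf0 : 0 ≤ f)
    (hd : AEStronglyMeasurable d μ) (hd01 : ∀ᵐ x ∂μ, 0 ≤ d x ∧ d x ≤ 1)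
    (h : ∫ x, d x * f x ∂μ = ∫ x, f x ∂μ) : ∀ᵐ x ∂μ, f x ≠ 0 → d x = 1 := by
  have hdf := hf.mul_of_ae_mem_unitInterval hd hd01
  have hgap : 0 ≤ᵐ[μ] fun x => f x - d x * f x :=
    hd01.mono fun x hx => sub_nonneg.mpr (mul_le_of_le_one_left (hf0 x) hx.2)
  have hzero : (fun x => f x - d x * f x) =ᵐ[μ] 0 := by
    rw [← integral_eq_zero_iff_of_nonneg_ae hgap (hf.sub hdf), integral_sub hf hdf, h, sub_self]
  filter_upwards [hzero] with x hx hfx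
  have : (1 - d x) * f x = 0 := by rw [sub_mul, one_mul]; exact hx
  linarith [(mul_eq_zero.mp this).resolve_right hfx]

theorem measure_support_le_lintegral_enorm (hfm : Measurable f)
    (h : ∀ᵐ x ∂μ, f x ≠ 0 → d x = 1) : μ (Function.support f) ≤ ∫⁻ x, ‖d x‖ₑ ∂μ :=
  calc μ (Function.support f) = ∫⁻ x, (Function.support f).indicator 1 x ∂μ :=
        (lintegral_indicator_one (measurableSet_support hfm)).symm
    _ ≤ ∫⁻ x, ‖d x‖ₑ ∂μ := lintegral_mono_ae <| h.mono fun x hx => by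
        by_cases hfx : f x = 0
        · simp [hfx]
        · simp [hfx, hx hfx]

theorem exists_indicator_integral_mul_eq {B : Set Ω} (hB : MeasurableSet B) {K : ℝ≥0∞}
    (hBK : μ B ≤ K) :
    ∃ d : Ω → ℝ, AEStronglyMeasurable d μ ∧ (∀ᵐ x ∂μ, 0 ≤ d x ∧ d x ≤ 1) ∧
      ∫⁻ x, ‖d x‖ₑ ∂μ ≤ K ∧ ∫ x, d x * f x ∂μ = ∫ x in B, f x ∂μ := by
  refine ⟨B.indicator 1, (measurable_const.indicator hB).aestronglyMeasurable,
    .of_forall fun x => ⟨indicator_nonneg (fun _ _ => zero_le_one) x,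
      indicator_le_self' (fun _ _ => zero_le_one) x⟩, ?_, ?_⟩
  · simpa [enorm_indicator_eq_indicator_enorm, lintegral_indicator hB] using hBK
  · simp only [← indicator_mul_left, Pi.one_apply, one_mul, integral_indicator hB]

end Bathtub

namespace AtomFree

theorem exists_subset_measure_lt (hμ : AtomFree μ) {A : Set Ω} (hA : MeasurableSet A)
    (hA0 : 0 < μ A) (hA_fin : μ A ≠ ∞) {ε : ℝ≥0∞} (hε : 0 < ε) :
    ∃ B ⊆ A, MeasurableSet B ∧ 0 < μ B ∧ μ B < ε := by
  set m := ⨅ (B : Set Ω) (_ : B ⊆ A ∧ MeasurableSet B ∧ 0 < μ B), μ B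
  -- splitting an admissible `B` into two admissible pieces shows `2 m ≤ μ B`, so `m = 0`
  have h2m : ∀ B ⊆ A, MeasurableSet B → 0 < μ B → m + m ≤ μ B := by
    intro B hBA hB hB0
    obtain ⟨D, hD, hDB, hD0, hBD0⟩ := hμ B hB hB0
    calc m + m ≤ μ D + μ (B \ D) := add_le_add (biInf_le _ ⟨hDB.trans hBA, hD, hD0⟩)
          (biInf_le _ ⟨sdiff_subset.trans hBA, hB.diff hD, hBD0⟩)
      _ = μ B := by rw [measure_add_sdiff hD.nullMeasurableSet, union_eq_self_of_subset_left hDB]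
  have hm_fin : m ≠ ∞ := ne_top_of_le_ne_top hA_fin (biInf_le _ ⟨subset_rfl, hA, hA0⟩)
  have hm : m = 0 := by
    have : m + m ≤ m + 0 := by
      rw [add_zero]; exact le_iInf₂ fun B hB => h2m B hB.1 hB.2.1 hB.2.2
    exact nonpos_iff_eq_zero.mp ((ENNReal.add_le_add_iff_left hm_fin).mp this)
  obtain ⟨B, hB⟩ := iInf_lt_iff.mp (hm ▸ hε : m < ε)
  obtain ⟨⟨hBA, hB, hB0⟩, hBε⟩ := iInf_lt_iff.mp hB
  exact ⟨B, hBA, hB, hB0, hBε⟩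

theorem exists_subset_measure_eq (hμ : AtomFree μ) {A : Set Ω} (hA : MeasurableSet A)
    (hA_fin : μ A ≠ ∞) {c : ℝ≥0∞} (hc : c ≤ μ A) : ∃ B ⊆ A, MeasurableSet B ∧ μ B = c := by
  set P : Set Ω → Prop := fun B => B ⊆ A ∧ MeasurableSet B ∧ μ B ≤ c
  have hc_fin : c ≠ ∞ := ne_top_of_le_ne_top hA_fin hc
  /- Greedy exhaustion: `F (n + 1)` comes within `2⁻¹ ^ n` of the largest measure `s (F n)`
  reachable in `P` from `F n`. If the union `B` had `μ B < c`, a small positive set `D` outside `B`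
  could still be added at every stage, contradicting these bounds. -/
  set s : Set Ω → ℝ≥0∞ := fun B => ⨆ C : {C // P C ∧ B ⊆ C}, μ C.1
  have hs_le : ∀ B, s B ≤ c := fun B => iSup_le fun C => C.2.1.2.2
  -- stated for every `B`, so that `choose` yields a total step function
  have hstep : ∀ (n : ℕ) (B : Set Ω), ∃ C, P B → P C ∧ B ⊆ C ∧ s B < μ C + 2⁻¹ ^ n := by
    intro n B
    by_cases hB : P B
    · have : Nonempty {C // P C ∧ B ⊆ C} := ⟨⟨B, hB, subset_rfl⟩⟩
      have hlt : s B < s B + 2⁻¹ ^ n :=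
        ENNReal.lt_add_right (ne_top_of_le_ne_top hc_fin (hs_le B)) (by simp)
      rw [ENNReal.iSup_add, lt_iSup_iff] at hlt
      obtain ⟨⟨C, hC, hBC⟩, hC_lt⟩ := hlt
      exact ⟨C, fun _ => ⟨hC, hBC, hC_lt⟩⟩
    · exact ⟨B, fun h => absurd h hB⟩
  choose next hnext using hstep
  set F : ℕ → Set Ω := fun n => Nat.rec ∅ next n
  have hF : ∀ n, P (F n) := by
    intro n
    induction n with
    | zero => exact ⟨empty_subset A, MeasurableSet.empty, by simp [F]⟩
    | succ n ih => exact (hnext n (F n) ih).1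
  have hF_mono : Monotone F := monotone_nat_of_le_succ fun n => (hnext n (F n) (hF n)).2.1
  set B := ⋃ n, F n
  have hBP : P B := by
    refine ⟨iUnion_subset fun n => (hF n).1, MeasurableSet.iUnion fun n => (hF n).2.1, ?_⟩
    rw [hF_mono.measure_iUnion]
    exact iSup_le fun n => (hF n).2.2
  refine ⟨B, hBP.1, hBP.2.1, le_antisymm hBP.2.2 (not_lt.mp fun hlt => ?_)⟩
  have hAB : 0 < μ (A \ B) := (tsub_pos_of_lt (hlt.trans_le hc)).trans_le le_measure_sdiff
  obtain ⟨D, hDAB, hD, hD0, hDc⟩ := hμ.exists_subset_measure_lt (hA.diff hBP.2.1) hAB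
    (ne_top_of_le_ne_top hA_fin (measure_mono sdiff_subset)) (tsub_pos_of_lt hlt)
  have hBD : Disjoint B D := disjoint_left.mpr fun x hxB hxD => (hDAB hxD).2 hxB
  have hBDP : P (B ∪ D) := by
    refine ⟨union_subset hBP.1 (hDAB.trans sdiff_subset), hBP.2.1.union hD, ?_⟩
    rw [measure_union hBD hD]
    exact (lt_tsub_iff_left.mp hDc).le
  have hB_fin : μ B ≠ ∞ := ne_top_of_le_ne_top hc_fin hBP.2.2
  have hD_small : ∀ n : ℕ, μ D < 2⁻¹ ^ n := by
    intro n
    have hreach : μ (B ∪ D) ≤ s (F n) :=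
      le_iSup (fun C : {C // P C ∧ F n ⊆ C} => μ C.1)
        ⟨B ∪ D, hBDP, (subset_iUnion F n).trans subset_union_left⟩
    have : μ B + μ D < μ B + 2⁻¹ ^ n :=
      calc μ B + μ D = μ (B ∪ D) := (measure_union hBD hD).symm
        _ ≤ s (F n) := hreach
        _ < μ (F (n + 1)) + 2⁻¹ ^ n := (hnext n (F n) (hF n)).2.2
        _ ≤ μ B + 2⁻¹ ^ n := by gcongr; exact subset_iUnion F (n + 1)
    exact (ENNReal.add_lt_add_iff_left hB_fin).mp this
  obtain ⟨n, hn⟩ := ENNReal.exists_inv_two_pow_lt hD0.ne'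
  exact (hD_small n).not_gt hn

theorem exists_between_measure_eq (hμ : AtomFree μ) {s u : Set Ω} (hs : MeasurableSet s)
    (hu : MeasurableSet u) (hsu : s ⊆ u) (hu_fin : μ u ≠ ∞) {c : ℝ≥0∞} (hsc : μ s ≤ c)
    (hcu : c ≤ μ u) : ∃ A, s ⊆ A ∧ A ⊆ u ∧ MeasurableSet A ∧ μ A = c := by
  have hs_fin : μ s ≠ ∞ := ne_top_of_le_ne_top hu_fin (measure_mono hsu)
  obtain ⟨B, hBus, hB, hBc⟩ := hμ.exists_subset_measure_eq (hu.diff hs)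
    (ne_top_of_le_ne_top hu_fin (measure_mono sdiff_subset))
    (c := c - μ s) (by rw [measure_sdiff hsu hs.nullMeasurableSet hs_fin]; gcongr)
  have hsB : Disjoint s B := disjoint_left.mpr fun x hxs hxB => (hBus hxB).2 hxs
  refine ⟨s ∪ B, subset_union_left, union_subset hsu (hBus.trans sdiff_subset), hs.union hB, ?_⟩
  rw [measure_union hsB hB, hBc, add_tsub_cancel_of_le hsc]

theorem exists_level_set (hμ : AtomFree μ) {f : Ω → ℝ} (hfm : Measurable f)
    (hf : Integrable f μ) {K : ℝ≥0∞} (hK : 0 < K) :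
    ∃ t A, 0 ≤ t ∧ MeasurableSet A ∧ μ A ≤ K ∧ (0 < t → μ A = K) ∧
      (∀ x ∈ A, t ≤ f x) ∧ (∀ x ∉ A, f x ≤ t) := by
  obtain ⟨t, ht0, hlt, hle⟩ := exists_threshold hf hK
  rcases ht0.eq_or_lt with rfl | ht
  · exact ⟨0, {x | 0 < f x}, le_rfl, hfm measurableSet_Ioi, hlt, fun h => (lt_irrefl 0 h).elim,
      fun x hx => le_of_lt hx, fun x hx => not_lt.mp hx⟩
  · obtain ⟨A, hsA, hAu, hA, hAK⟩ := hμ.exists_between_measure_eq (s := {x | t < f x})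
      (u := {x | t ≤ f x}) (hfm measurableSet_Ioi) (hfm measurableSet_Ici)
      (fun x (hx : t < f x) => hx.le) (hf.measure_ge_lt_top ht).ne hlt (hle ht)
    exact ⟨t, A, ht.le, hA, hAK.le, fun _ => hAK, fun x hx => hAu hx,
      fun x hx => not_lt.mp fun h => hx (hsA h)⟩

theorem exists_setIntegral_isMax (hμ : AtomFree μ) {f : Ω → ℝ} (hfm : Measurable f)
    (hf : Integrable f μ) (hf0 : 0 ≤ f) {K : ℝ≥0∞} (hK0 : 0 < K) (hK : K ≠ ∞) :
    ∃ A, MeasurableSet A ∧ μ A ≤ K ∧ ∀ d : Ω → ℝ, AEStronglyMeasurable d μ →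
      (∀ᵐ x ∂μ, 0 ≤ d x ∧ d x ≤ 1) → ∫⁻ x, ‖d x‖ₑ ∂μ ≤ K →
      ∫ x, d x * f x ∂μ ≤ ∫ x in A, f x ∂μ ∧
      (K ≤ μ (Function.support f) → ∫ x, d x * f x ∂μ = ∫ x in A, f x ∂μ →
        ∫⁻ x, ‖d x‖ₑ ∂μ = K) := by
  obtain ⟨t, A, ht0, hA, hAK, hAK_eq, hfA, hfAc⟩ := hμ.exists_level_set hfm hf hK0
  refine ⟨A, hA, hAK, fun d hdm hd01 hdK => ?_⟩
  have hd_fin : ∫⁻ x, ‖d x‖ₑ ∂μ ≠ ∞ := ne_top_of_le_ne_top hK hdK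
  have hd_int : ∫ x, d x ∂μ = (∫⁻ x, ‖d x‖ₑ ∂μ).toReal := by
    rw [← integral_norm_eq_lintegral_enorm hdm]
    exact integral_congr_ae (hd01.mono fun x hx => (Real.norm_of_nonneg hx.1).symm)
  have hbath := integral_mul_add_measureReal_le hf hA (ne_top_of_le_ne_top hK hAK) hfA hfAc
    ⟨hdm, hd_fin.lt_top⟩ hd01
  rcases ht0.eq_or_lt with rfl | ht
  · simp only [zero_mul, add_zero] at hbath
    refine ⟨hbath, fun hKf heq => le_antisymm hdK (hKf.trans ?_)⟩
    have hfA_eq : ∫ x in A, f x ∂μ = ∫ x, f x ∂μ :=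
      setIntegral_eq_integral_of_forall_compl_eq_zero fun x hx => le_antisymm (hfAc x hx) (hf0 x)
    exact measure_support_le_lintegral_enorm hfm
      (ae_eq_one_of_integral_mul_eq hf hf0 hdm hd01 (heq.trans hfA_eq))
  · have hA_real : μ.real A = K.toReal := by rw [measureReal_def, hAK_eq ht]
    have hdA : ∫ x, d x ∂μ ≤ μ.real A := by
      rw [hd_int, hA_real]; exact ENNReal.toReal_mono hK hdK
    refine ⟨by nlinarith, fun _ heq => le_antisymm hdK ?_⟩
    have hAd : μ.real A ≤ ∫ x, d x ∂μ := le_of_mul_le_mul_left (by linarith) ht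
    rw [hd_int, hA_real] at hAd
    exact (ENNReal.toReal_le_toReal hK hd_fin).mp hAd

theorem exists_setIntegral_abs_isMax (hμ : AtomFree μ) {u : Ω → ℝ} (hu : Integrable u μ)
    {K : ℝ≥0∞} (hK0 : 0 < K) (hK : K ≠ ∞) :
    ∃ A, MeasurableSet A ∧ μ A ≤ K ∧ ∀ d : Ω → ℝ, AEStronglyMeasurable d μ →
      (∀ᵐ x ∂μ, 0 ≤ d x ∧ d x ≤ 1) → ∫⁻ x, ‖d x‖ₑ ∂μ ≤ K →
      ∫ x, d x * |u x| ∂μ ≤ ∫ x in A, |u x| ∂μ ∧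
      (K ≤ μ (Function.support u) → ∫ x, d x * |u x| ∂μ = ∫ x in A, |u x| ∂μ →
        ∫⁻ x, ‖d x‖ₑ ∂μ = K) := by
  set g := hu.1.mk u
  have hug : u =ᵐ[μ] g := hu.1.ae_eq_mk
  have habs : (fun x => |u x|) =ᵐ[μ] fun x => |g x| := hug.fun_comp abs
  obtain ⟨A, hA, hAK, hmax⟩ := hμ.exists_setIntegral_isMax
    hu.1.stronglyMeasurable_mk.measurable.abs (hu.abs.congr habs) (fun x => abs_nonneg _) hK0 hK
  have hsupp : μ (Function.support u) = μ (Function.support fun x => |g x|) :=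
    measure_congr <| hug.mono fun x hx => propext <| by
      change u x ≠ 0 ↔ |g x| ≠ 0
      rw [hx, abs_ne_zero]
  have hset : ∫ x in A, |u x| ∂μ = ∫ x in A, |g x| ∂μ :=
    integral_congr_ae (ae_restrict_of_ae habs)
  have hmul : ∀ d : Ω → ℝ, ∫ x, d x * |u x| ∂μ = ∫ x, d x * |g x| ∂μ := fun d =>
    integral_congr_ae (habs.mono fun x hx => by simp only [hx])
  refine ⟨A, hA, hAK, fun d hdm hd01 hdK => ?_⟩
  rw [hset, hmul, hsupp]
  exact hmax d hdm hd01 hdK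

end AtomFree

end

theorem stmt8_general {Ω : Type*} [MeasurableSpace Ω] (μ : Measure Ω)
    (hμ : AtomFree μ) (u : Ω → ℝ) (hu : Integrable u μ)
    (K : ℝ≥0∞) (hK0 : 0 < K) (hK : K < μ Set.univ) :
    largestK μ K u =
      sSup {r : ℝ | ∃ d : Ω → ℝ, AEStronglyMeasurable d μ ∧
        (∀ᵐ x ∂μ, 0 ≤ d x ∧ d x ≤ 1) ∧ (∫⁻ x, ‖d x‖₊ ∂μ) ≤ K ∧
        r = ∫ x, d x * |u x| ∂μ} ∧
    (∃ A : Set Ω, MeasurableSet A ∧ μ A ≤ K ∧ (∫ x in A, |u x| ∂μ) = largestK μ K u) ∧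
    (∃ d : Ω → ℝ, AEStronglyMeasurable d μ ∧ (∀ᵐ x ∂μ, 0 ≤ d x ∧ d x ≤ 1) ∧
      (∫⁻ x, ‖d x‖₊ ∂μ) ≤ K ∧ (∫ x, d x * |u x| ∂μ) = largestK μ K u) ∧
    (K ≤ μ (Function.support u) →
      ∀ d : Ω → ℝ, AEStronglyMeasurable d μ → (∀ᵐ x ∂μ, 0 ≤ d x ∧ d x ≤ 1) →
        (∫⁻ x, ‖d x‖₊ ∂μ) ≤ K → (∫ x, d x * |u x| ∂μ) = largestK μ K u →
        (∫⁻ x, ‖d x‖₊ ∂μ) = K) := by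
  obtain ⟨A, hA, hAK, hmax⟩ := hμ.exists_setIntegral_abs_isMax hu hK0 hK.ne_top
  set V := ∫ x in A, |u x| ∂μ
  obtain ⟨dA, hdAm, hdA01, hdAK, hdA⟩ :=
    exists_indicator_integral_mul_eq (f := fun x => |u x|) hA hAK
  have hfrac : IsGreatest {r : ℝ | ∃ d : Ω → ℝ, AEStronglyMeasurable d μ ∧
      (∀ᵐ x ∂μ, 0 ≤ d x ∧ d x ≤ 1) ∧ (∫⁻ x, ‖d x‖₊ ∂μ) ≤ K ∧
      r = ∫ x, d x * |u x| ∂μ} V :=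
    ⟨⟨dA, hdAm, hdA01, hdAK, hdA.symm⟩,
      fun r ⟨d, hdm, hd01, hdK, hr⟩ => hr ▸ (hmax d hdm hd01 hdK).1⟩
  have hsets : IsGreatest {r : ℝ | ∃ B : Set Ω, MeasurableSet B ∧ μ B ≤ K ∧
      r = ∫ x in B, |u x| ∂μ} V := by
    refine ⟨⟨A, hA, hAK, rfl⟩, fun r ⟨B, hB, hBK, hr⟩ => hfrac.2 ?_⟩
    obtain ⟨d, hdm, hd01, hdK, hd⟩ := exists_indicator_integral_mul_eq (f := fun x => |u x|) hB hBK
    exact ⟨d, hdm, hd01, hdK, hr.trans hd.symm⟩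
  have hV : largestK μ K u = V := hsets.csSup_eq
  exact ⟨by rw [hV, hfrac.csSup_eq], ⟨A, hA, hAK, hV.symm⟩,
    ⟨dA, hdAm, hdA01, hdAK, hdA.trans hV.symm⟩,
    fun hKu d hdm hd01 hdK hd => (hmax d hdm hd01 hdK).2 hKu (hd.trans hV)⟩

/-- in an atom-free σ-finite space,
`|u|_K = sup { ∫ d|u| dμ : d ∈ L^∞, 0 ≤ d ≤ 1, ‖d‖₁ ≤ K }`; both this supremum and the
supremum over characteristic functions are attained; and if `μ(supp u) ≥ K` then every
maximizer `d` satisfies `‖d‖₁ = K`. -/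
theorem stmt8 {Ω : Type*} [MeasurableSpace Ω] (μ : Measure Ω) [SigmaFinite μ]
    (hμ : AtomFree μ) (u : Ω → ℝ) (hu : Integrable u μ)
    (K : ℝ≥0∞) (hK0 : 0 < K) (hK : K < μ Set.univ) :
    largestK μ K u =
      sSup {r : ℝ | ∃ d : Ω → ℝ, AEStronglyMeasurable d μ ∧
        (∀ᵐ x ∂μ, 0 ≤ d x ∧ d x ≤ 1) ∧ (∫⁻ x, ‖d x‖₊ ∂μ) ≤ K ∧
        r = ∫ x, d x * |u x| ∂μ} ∧
    (∃ A : Set Ω, MeasurableSet A ∧ μ A ≤ K ∧ (∫ x in A, |u x| ∂μ) = largestK μ K u) ∧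
    (∃ d : Ω → ℝ, AEStronglyMeasurable d μ ∧ (∀ᵐ x ∂μ, 0 ≤ d x ∧ d x ≤ 1) ∧
      (∫⁻ x, ‖d x‖₊ ∂μ) ≤ K ∧ (∫ x, d x * |u x| ∂μ) = largestK μ K u) ∧
    (K ≤ μ (Function.support u) →
      ∀ d : Ω → ℝ, AEStronglyMeasurable d μ → (∀ᵐ x ∂μ, 0 ≤ d x ∧ d x ≤ 1) →
        (∫⁻ x, ‖d x‖₊ ∂μ) ≤ K → (∫ x, d x * |u x| ∂μ) = largestK μ K u →
        (∫⁻ x, ‖d x‖₊ ∂μ) = K) :=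
  stmt8_general μ hμ u hu K hK0 hK
end
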